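/- For every 2×2 unitary matrix S, ‖U(S)|11⟩ − |20⟩‖² ≥ 2 − √2 > 0; in particular, there is no unitary S with U(S)|11⟩ = |20⟩. -/

import Mathlib

/-- The two-photon evolution matrix of a 2×2 scattering matrix `S`, in the basis
{|20⟩, |02⟩, |11⟩}. -/
noncomputable def twoPhoton (S : Matrix (Fin 2) (Fin 2) ℂ) : Matrix (Fin 3) (Fin 3) ℂ :=
  !![S 0 0 ^ 2, S 0 1 ^ 2, (Real.sqrt 2 : ℂ) * (S 0 0 * S 0 1);
     S 1 0 ^ 2, S 1 1 ^ 2, (Real.sqrt 2 : ℂ) * (S 1 0 * S 1 1);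
     (Real.sqrt 2 : ℂ) * (S 0 0 * S 1 0), (Real.sqrt 2 : ℂ) * (S 0 1 * S 1 1),
       S 0 0 * S 1 1 + S 0 1 * S 1 0]

/-- No 2×2 unitary S makes U(S)|11⟩ = |20⟩; in fact the squared Euclidean distance
between U(S)|11⟩ and |20⟩ is at least 2 − √2 > 0. -/
theorem no_hom11_to_20 (S : Matrix (Fin 2) (Fin 2) ℂ)
    (hS : S ∈ Matrix.unitaryGroup (Fin 2) ℂ) :
    (twoPhoton S).mulVec ![0, 0, 1] ≠ ![1, 0, 0] ∧
    2 - Real.sqrt 2 ≤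
      ∑ i, ‖(twoPhoton S).mulVec ![0, 0, 1] i - ![(1 : ℂ), 0, 0] i‖ ^ 2 ∧
    0 < 2 - Real.sqrt 2 := by
  set a := S 0 0 with ha
  set b := S 0 1 with hb
  set c := S 1 0 with hc
  set d := S 1 1 with hd
  have h1 := congrFun (congrFun hS.2 0) 0
  have h4 := congrFun (congrFun hS.1 0) 0
  have h5 := congrFun (congrFun hS.1 1) 1
  have h6 := congrFun (congrFun hS.1 0) 1
  simp [Matrix.mul_apply, Fin.sum_univ_two, Matrix.one_apply, Matrix.star_apply] at h1 h4 h5 h6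
  have h6' := congrArg (starRingEnd ℂ) h6
  simp [map_add, map_mul, Complex.conj_conj] at h6'
  have hs2 : ((Real.sqrt 2 : ℝ) : ℂ) ^ 2 = 2 := by
    rw [← Complex.ofReal_pow, Real.sq_sqrt (by norm_num : (2:ℝ) ≥ 0)]; norm_num
  have hconj : (starRingEnd ℂ) ((Real.sqrt 2 : ℝ) : ℂ) = ((Real.sqrt 2 : ℝ) : ℂ) :=
    Complex.conj_ofReal _
  set s : ℂ := ((Real.sqrt 2 : ℝ) : ℂ) with hsdef
  -- key complex identity
  have hE : (s*(a*b)-1) * ((starRingEnd ℂ) (s*(a*b)-1))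
      + (s*(c*d)) * ((starRingEnd ℂ) (s*(c*d)))
      + (a*d+b*c) * ((starRingEnd ℂ) (a*d+b*c))
      = 2 - s*(a*b + (starRingEnd ℂ) a * (starRingEnd ℂ) b) := by
    simp only [map_sub, map_add, map_mul, map_one]
    linear_combination (a * (starRingEnd ℂ) a * b * (starRingEnd ℂ) b
        + c * (starRingEnd ℂ) c * d * (starRingEnd ℂ) d) * hs2
      + d * (starRingEnd ℂ) c * h6' + c * (starRingEnd ℂ) d * h6
      + a * (starRingEnd ℂ) a * h5 + b * (starRingEnd ℂ) b * h4 + h1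
      + (s * (a*b) * (starRingEnd ℂ) a * (starRingEnd ℂ) b
        + s * (c*d) * (starRingEnd ℂ) c * (starRingEnd ℂ) d
        + (starRingEnd ℂ) a * (starRingEnd ℂ) b) * hconj
      - 2 * ((starRingEnd ℂ) a * (starRingEnd ℂ) b) * hconj
  have habs : ∀ z : ℂ, ‖z‖ ^ 2 = (z * (starRingEnd ℂ) z).re := by
    intro z; rw [Complex.mul_conj]; simp [Complex.sq_norm]
  have hv : (twoPhoton S).mulVec ![0, 0, 1] = ![s*(a*b), s*(c*d), a*d+b*c] := by
    funext i
    fin_cases i <;>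
      simp [twoPhoton, Matrix.mulVec, dotProduct, Fin.sum_univ_three, ← ha, ← hb, ← hc, ← hd, ← hsdef]
  have hsum : ∑ i, ‖(twoPhoton S).mulVec ![0, 0, 1] i - ![(1 : ℂ), 0, 0] i‖ ^ 2
      = 2 - Real.sqrt 2 * (2 * (a*b).re) := by
    rw [hv]
    rw [Fin.sum_univ_three]
    simp only [Matrix.cons_val_zero, Matrix.cons_val_one, Matrix.head_cons,
      Matrix.cons_val_two, Matrix.tail_cons, sub_zero]
    rw [habs, habs, habs, ← Complex.add_re, ← Complex.add_re, hE]
    have h2re : a*b + (starRingEnd ℂ) a * (starRingEnd ℂ) b = ((2*(a*b).re : ℝ) : ℂ) := by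
      rw [← map_mul, Complex.add_conj]
    rw [h2re, hsdef, ← Complex.ofReal_mul]
    simp [Complex.sub_re, Complex.ofReal_re]
  have hA : ‖a‖ ^ 2 + ‖b‖ ^ 2 = 1 := by
    have h := congrArg Complex.re h1
    rw [Complex.mul_conj, Complex.mul_conj] at h
    rw [Complex.sq_norm, Complex.sq_norm]
    simpa using h
  have hr : (a*b).re ≤ ‖a‖ * ‖b‖ := by
    calc (a*b).re ≤ ‖a*b‖ := Complex.re_le_norm _
      _ = ‖a‖ * ‖b‖ := norm_mul _ _
  have hsqrt : (0:ℝ) ≤ Real.sqrt 2 := Real.sqrt_nonneg 2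
  have hlt : Real.sqrt 2 < 2 := by
    nlinarith [Real.sq_sqrt (by norm_num : (0:ℝ) ≤ 2)]
  have hmain : 2 - Real.sqrt 2 ≤
      ∑ i, ‖(twoPhoton S).mulVec ![0, 0, 1] i - ![(1 : ℂ), 0, 0] i‖ ^ 2 := by
    rw [hsum]
    nlinarith [sq_nonneg (‖a‖ - ‖b‖), hr, hA, hsqrt]
  refine ⟨?_, hmain, by linarith⟩
  intro h
  rw [h] at hmain
  have hzero : ∑ i, ‖(![(1:ℂ),0,0]) i - ![(1 : ℂ), 0, 0] i‖ ^ 2 = 0 := by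
    apply Finset.sum_eq_zero
    intro i _
    simp
  rw [hzero] at hmain
  linarith
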